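/- Let i, j be positive integers with greatest common divisor υ, and write i = υ·i', j = υ·j'. For any integer u, the number of pairs of positive integers (n, n') with i·n ≤ t, j·n' ≤ t and i·n − j·n' = υ·u differs from ⌊υ·t/(i·j)⌋ by at most a constant independent of t. -/

import Mathlib

/-!
Dividing by `υ`, the equation becomes `i' * n - j' * n' = u` with `i'`, `j'` coprime, whose
integer solutions are `(A + j' * k, B + i' * k)`, `k ∈ ℤ`, for one particular solution `(A, B)`.
The constraints `1 ≤ n`, `1 ≤ n'`, `i * n ≤ t`, `j * n' ≤ t` cut out an interval of indices `k`
whose lower end does not depend on `t` and whose upper end is `t / (υ * i' * j') - O(1)`, and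
`t / (υ * i' * j') = υ * t / (i * j)`. Such an interval contains `⌊υ * t / (i * j)⌋ + O(1)` integers.
-/

/-- Number of pairs `(n, n')` of positive integers with `i*n ≤ t`, `j*n' ≤ t` and
`i*n - j*n' = υ*u`. -/
noncomputable def solCount (i j υ : ℕ) (u : ℤ) (t : ℝ) : ℕ :=
  ((Finset.Icc 1 ⌊t⌋₊ ×ˢ Finset.Icc 1 ⌊t⌋₊).filter
    (fun p : ℕ × ℕ => ((i * p.1 : ℕ) : ℝ) ≤ t ∧ ((j * p.2 : ℕ) : ℝ) ≤ t ∧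
      (i : ℤ) * p.1 - (j : ℤ) * p.2 = (υ : ℤ) * u)).card

open Finset

theorem IsCoprime.exists_eq_add_mul_of_mul_sub_mul_eq {R : Type*} [CommRing R] [NoZeroDivisors R]
    {a b x y x₀ y₀ : R} (hab : IsCoprime a b) (hb : b ≠ 0)
    (h : a * x - b * y = a * x₀ - b * y₀) : ∃ k, x = x₀ + b * k ∧ y = y₀ + a * k := by
  have hmul : a * (x - x₀) = b * (y - y₀) := by linear_combination h
  obtain ⟨k, hk⟩ := hab.symm.dvd_of_dvd_mul_left ⟨_, hmul⟩
  refine ⟨k, by linear_combination hk, mul_left_cancel₀ hb ?_⟩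
  linear_combination a * hk - hmul

section OrderedField

variable {K : Type*} [Field K] [LinearOrder K] [IsStrictOrderedRing K]

theorem one_le_add_mul_iff {b : K} (hb : 0 < b) (A k : K) : 1 ≤ A + b * k ↔ (1 - A) / b ≤ k := by
  rw [div_le_iff₀ hb]; constructor <;> intro <;> linarith

theorem mul_add_mul_le_iff {b m : K} (hb : 0 < b) (hm : 0 < m) (A k t : K) :
    m * (A + b * k) ≤ t ↔ A / b ≤ t / (m * b) - k := by
  have : (t / (m * b) - k) * b = t / m - b * k := by field_simp
  rw [div_le_iff₀ hb, this, ← le_div_iff₀' hm]; constructor <;> intro <;> linarith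

variable [FloorRing K]

theorem le_floor_of_mul_le {m n : ℕ} {t : K} (hm : 0 < m) (h : ((m * n : ℕ) : K) ≤ t) :
    n ≤ ⌊t⌋₊ :=
  Nat.le_floor <| (Nat.cast_le.2 (Nat.le_mul_of_pos_left n hm)).trans h

theorem abs_card_Icc_ceil_floor_sub_floor_le (lo c : K) {s : K} (hs : 0 ≤ s) :
    |(#(Icc ⌈lo⌉ ⌊s - c⌋) : K) - ⌊s⌋| ≤ |lo| + |c| + 2 := by
  have hcard : (#(Icc ⌈lo⌉ ⌊s - c⌋) : K) = max ((⌊s - c⌋ + 1 - ⌈lo⌉ : ℤ) : K) 0 := by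
    rw [Int.card_Icc, ← Int.cast_natCast, Int.toNat_eq_max]
    push_cast; rfl
  calc |(#(Icc ⌈lo⌉ ⌊s - c⌋) : K) - ⌊s⌋|
      = |max ((⌊s - c⌋ + 1 - ⌈lo⌉ : ℤ) : K) 0 - max (⌊s⌋ : K) 0| := by
        rw [hcard, max_eq_left (a := (⌊s⌋ : K)) (by positivity)]
    _ ≤ |((⌊s - c⌋ + 1 - ⌈lo⌉ : ℤ) : K) - ⌊s⌋| := abs_max_sub_max_le_abs _ _ _
    _ ≤ |lo| + |c| + 2 := by
        push_cast
        rw [abs_le]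
        constructor <;>
        linarith [Int.floor_le (s - c), Int.sub_one_lt_floor (s - c), Int.floor_le s,
          Int.sub_one_lt_floor s, Int.le_ceil lo, Int.ceil_lt_add_one lo,
          le_abs_self lo, neg_abs_le lo, le_abs_self c, neg_abs_le c]

end OrderedField

/-- Indices `k` of the solutions `(A + b * k, B + a * k)` counted by
`solCount (υ * a) (υ * b) υ u t`, where `a * A - b * B = u`. -/
noncomputable def solutionIndices (υ a b : ℕ) (A B : ℤ) (t : ℝ) : Finset ℤ :=
  Icc ⌈max ((1 - (A : ℝ)) / b) ((1 - B) / a)⌉ ⌊t / (υ * a * b) - max ((A : ℝ) / b) (B / a)⌋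

theorem mem_solutionIndices_iff {υ a b : ℕ} (hυ : 0 < υ) (ha : 0 < a) (hb : 0 < b)
    (A B k : ℤ) (t : ℝ) :
    k ∈ solutionIndices υ a b A B t ↔
      1 ≤ A + b * k ∧ 1 ≤ B + a * k ∧
        ((υ * a : ℕ) : ℝ) * (A + b * k : ℤ) ≤ t ∧ ((υ * b : ℕ) : ℝ) * (B + a * k : ℤ) ≤ t := by
  have ha' : (0 : ℝ) < a := by positivity
  have hb' : (0 : ℝ) < b := by positivity
  have hs : t / (υ * a * b) = t / (υ * b * a) := by ring
  rw [solutionIndices, mem_Icc, Int.ceil_le, Int.le_floor, max_le_iff, le_sub_comm, max_le_iff,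
    ← one_le_add_mul_iff hb', ← one_le_add_mul_iff ha', ← mul_add_mul_le_iff hb' (by positivity),
    hs, ← mul_add_mul_le_iff ha' (by positivity)]
  norm_cast
  exact and_assoc

theorem solCount_mul_eq_card_solutionIndices {υ a b : ℕ} (hυ : 0 < υ) (ha : 0 < a) (hb : 0 < b)
    (hab : IsCoprime (a : ℤ) b) {u A B : ℤ} (hAB : a * A - b * B = u) (t : ℝ) :
    solCount (υ * a) (υ * b) υ u t = #(solutionIndices υ a b A B t) := by
  symm
  refine card_bij (fun k _ => ((A + b * k).toNat, (B + a * k).toNat)) ?_ ?_ ?_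
  · intro k hk
    obtain ⟨hA, hB, htA, htB⟩ := (mem_solutionIndices_iff hυ ha hb A B k t).1 hk
    obtain ⟨n, hn⟩ : ∃ n : ℕ, (n : ℤ) = A + b * k := ⟨_, Int.toNat_of_nonneg (by omega)⟩
    obtain ⟨n', hn'⟩ : ∃ n' : ℕ, (n' : ℤ) = B + a * k := ⟨_, Int.toNat_of_nonneg (by omega)⟩
    rw [← hn] at htA
    rw [← hn'] at htB
    rw [← hn, ← hn', Int.toNat_natCast, Int.toNat_natCast, mem_filter, mem_product, mem_Icc, mem_Icc]
    simp only [Int.cast_natCast, ← Nat.cast_mul] at htA htB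
    refine ⟨⟨⟨by omega, le_floor_of_mul_le (by positivity) htA⟩,
      by omega, le_floor_of_mul_le (by positivity) htB⟩, htA, htB, ?_⟩
    push_cast
    linear_combination υ * hAB + υ * a * hn - υ * b * hn'
  · intro k₁ hk₁ k₂ hk₂ h
    have h₁ := ((mem_solutionIndices_iff hυ ha hb A B k₁ t).1 hk₁).1
    have h₂ := ((mem_solutionIndices_iff hυ ha hb A B k₂ t).1 hk₂).1
    have h_fst : (A + b * k₁).toNat = (A + b * k₂).toNat := congrArg Prod.fst h
    exact mul_left_cancel₀ (by positivity) (by omega : (b : ℤ) * k₁ = b * k₂)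
  · rintro ⟨n, n'⟩ hp
    simp only [mem_filter, mem_product, mem_Icc] at hp
    obtain ⟨⟨⟨hn, -⟩, hn', -⟩, htn, htn', heq⟩ := hp
    have heq' : (a : ℤ) * n - b * n' = a * A - b * B := by
      refine mul_left_cancel₀ (Int.natCast_ne_zero.2 hυ.ne') ?_
      push_cast at heq
      linear_combination heq - υ * hAB
    obtain ⟨k, hkn, hkn'⟩ := hab.exists_eq_add_mul_of_mul_sub_mul_eq (by positivity) heq'
    refine ⟨k, (mem_solutionIndices_iff hυ ha hb A B k t).2 ⟨by omega, by omega, ?_, ?_⟩, ?_⟩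
    · rw [← hkn]; exact_mod_cast htn
    · rw [← hkn']; exact_mod_cast htn'
    · rw [← hkn, ← hkn', Int.toNat_natCast, Int.toNat_natCast]

theorem count_solutions_asymptotics_general (i j υ i' j' : ℕ) (u : ℤ)
    (hi : 0 < i) (hj : 0 < j)
    (hi' : i = υ * i') (hj' : j = υ * j') (hco : Nat.Coprime i' j') :
    ∃ C : ℝ, ∀ t : ℝ, 0 < t →
      |(solCount i j υ u t : ℝ) - (⌊(υ : ℝ) * t / (i * j)⌋ : ℤ)| ≤ C := by
  subst hi' hj'
  have hυ : 0 < υ := Nat.pos_of_mul_pos_right hi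
  have hi' : 0 < i' := Nat.pos_of_mul_pos_left hi
  have hj' : 0 < j' := Nat.pos_of_mul_pos_left hj
  have hco : IsCoprime (i' : ℤ) j' := Nat.isCoprime_iff_coprime.2 hco
  obtain ⟨A, B, hAB⟩ : ∃ A B : ℤ, i' * A - j' * B = u :=
    let ⟨x, y, hxy⟩ := hco; ⟨u * x, -(u * y), by linear_combination u * hxy⟩
  refine ⟨|max ((1 - (A : ℝ)) / j') ((1 - B) / i')| + |max ((A : ℝ) / j') (B / i')| + 2,
    fun t ht => ?_⟩
  have hs : (υ : ℝ) * t / ((υ * i' : ℕ) * (υ * j' : ℕ)) = t / (υ * i' * j') := by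
    push_cast; field_simp
  rw [solCount_mul_eq_card_solutionIndices hυ hi' hj' hco hAB, hs]
  exact abs_card_Icc_ceil_floor_sub_floor_le _ _ (by positivity)

theorem count_solutions_asymptotics (i j υ i' j' : ℕ) (u : ℤ)
    (hi : 0 < i) (hj : 0 < j) (hυ : υ = Nat.gcd i j)
    (hi' : i = υ * i') (hj' : j = υ * j') (hco : Nat.Coprime i' j') :
    ∃ C : ℝ, ∀ t : ℝ, 0 < t →
      |(solCount i j υ u t : ℝ) - (⌊(υ : ℝ) * t / (i * j)⌋ : ℤ)| ≤ C :=
  count_solutions_asymptotics_general i j υ i' j' u hi hj hi' hj' hco
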